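/- arXiv:cs/0604059 — 2 statements merged into one kernel-verified Lean document; each statement's English description precedes it below -/
import Mathlib

section
/- For any two lattice polygonal regions A and B in the plane with A ∩ B nonempty, there exist lattice polygonal regions Q₁ and Q₂ such that Q₁ ⊆ A ∩ B ⊆ Q₂, every point x of (A ∩ B) \ Q₁ satisfies Metric.infDist x ((A ∩ B)ᶜ) < Real.sqrt 2, and every point x of Q₂ satisfies Metric.infDist x (A ∩ B) < Real.sqrt 2. -/
/-- A point of the Euclidean plane is a *lattice point* if both its coordinates
are integers. -/
def IsLatticePoint (p : EuclideanSpace ℝ (Fin 2)) : Prop :=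
  (∃ m : ℤ, p 0 = (m : ℝ)) ∧ (∃ k : ℤ, p 1 = (k : ℝ))

/-- A *lattice polygonal region* is a finite union of closed triangles
(convex hulls of three-point sets) all of whose vertices are lattice points. -/
def IsLatticePolygonalRegion (P : Set (EuclideanSpace ℝ (Fin 2))) : Prop :=
  ∃ T : Finset (EuclideanSpace ℝ (Fin 2) × EuclideanSpace ℝ (Fin 2) × EuclideanSpace ℝ (Fin 2)),
    (∀ t ∈ T, IsLatticePoint t.1 ∧ IsLatticePoint t.2.1 ∧ IsLatticePoint t.2.2) ∧
    P = ⋃ t ∈ T, convexHull ℝ ({t.1, t.2.1, t.2.2} : Set (EuclideanSpace ℝ (Fin 2)))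

open Metric Bornology Set

noncomputable section
abbrev E2 := EuclideanSpace ℝ (Fin 2)
def P2 (a b : ℝ) : E2 := (WithLp.equiv 2 (Fin 2 → ℝ)).symm ![a, b]

@[simp] lemma P2_apply0 (a b : ℝ) : P2 a b 0 = a := rfl
@[simp] lemma P2_apply1 (a b : ℝ) : P2 a b 1 = b := rfl

lemma P2_eta (x : E2) : x = P2 (x 0) (x 1) := by
  ext i
  fin_cases i <;> rfl

lemma mem_triangle {p q r x : E2} (α β γ : ℝ) (hα : 0 ≤ α) (hβ : 0 ≤ β) (hγ : 0 ≤ γ)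
    (hsum : α + β + γ = 1) (hx : α • p + β • q + γ • r = x) :
    x ∈ convexHull ℝ ({p, q, r} : Set E2) := by
  have h := Finset.centerMass_mem_convexHull (s := ({p, q, r} : Set E2))
    (Finset.univ : Finset (Fin 3))
    (w := ![α, β, γ]) (by intro i _; fin_cases i <;> simpa)
    (by simp [Fin.sum_univ_three, hsum]) (z := ![p, q, r])
    (by intro i _; fin_cases i <;> simp)
  rw [Finset.centerMass] at h
  simpa [Fin.sum_univ_three, hsum, hx] using h
end
noncomputable section
def cell (m k : ℤ) : Set E2 :=
  {x | (m:ℝ) ≤ x 0 ∧ x 0 ≤ (m:ℝ)+1 ∧ (k:ℝ) ≤ x 1 ∧ x 1 ≤ (k:ℝ)+1}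

lemma convex_cell (m k : ℤ) : Convex ℝ (cell m k) := by
  intro x hx y hy a b ha hb hab
  obtain ⟨h1, h2, h3, h4⟩ := hx
  obtain ⟨g1, g2, g3, g4⟩ := hy
  have e0 : (a • x + b • y) 0 = a * x 0 + b * y 0 := rfl
  have e1 : (a • x + b • y) 1 = a * x 1 + b * y 1 := rfl
  refine ⟨?_, ?_, ?_, ?_⟩
  · rw [e0]
    have e : a*((m:ℝ)) + b*((m:ℝ)) = (m:ℝ) := by rw [← add_mul, hab, one_mul]
    nlinarith [mul_le_mul_of_nonneg_left h1 ha, mul_le_mul_of_nonneg_left g1 hb]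
  · rw [e0]
    have e : a*((m:ℝ)+1) + b*((m:ℝ)+1) = (m:ℝ)+1 := by rw [← add_mul, hab, one_mul]
    nlinarith [mul_le_mul_of_nonneg_left h2 ha, mul_le_mul_of_nonneg_left g2 hb]
  · rw [e1]
    have e : a*((k:ℝ)) + b*((k:ℝ)) = (k:ℝ) := by rw [← add_mul, hab, one_mul]
    nlinarith [mul_le_mul_of_nonneg_left h3 ha, mul_le_mul_of_nonneg_left g3 hb]
  · rw [e1]
    have e : a*((k:ℝ)+1) + b*((k:ℝ)+1) = (k:ℝ)+1 := by rw [← add_mul, hab, one_mul]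
    nlinarith [mul_le_mul_of_nonneg_left h4 ha, mul_le_mul_of_nonneg_left g4 hb]

lemma mem_cell_floor (x : E2) : x ∈ cell ⌊x 0⌋ ⌊x 1⌋ :=
  ⟨Int.floor_le _, (Int.lt_floor_add_one _).le, Int.floor_le _, (Int.lt_floor_add_one _).le⟩

def v00 (m k : ℤ) : E2 := P2 m k
def v10 (m k : ℤ) : E2 := P2 ((m:ℝ)+1) k
def v01 (m k : ℤ) : E2 := P2 m ((k:ℝ)+1)
def v11 (m k : ℤ) : E2 := P2 ((m:ℝ)+1) ((k:ℝ)+1)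

lemma cell_eq_union (m k : ℤ) :
    cell m k = convexHull ℝ ({v00 m k, v10 m k, v11 m k} : Set E2)
      ∪ convexHull ℝ ({v00 m k, v01 m k, v11 m k} : Set E2) := by
  apply Subset.antisymm
  · intro x hx
    obtain ⟨h1, h2, h3, h4⟩ := hx
    set a := x 0 - m with ha
    set b := x 1 - k with hb
    rcases le_total b a with hba | hab
    · left
      refine mem_triangle (1-a) (a-b) b (by linarith) (by linarith) (by linarith) (by ring) ?_
      ext i
      fin_cases i <;>
        simp [v00, v10, v11, P2, PiLp.add_apply, PiLp.smul_apply] <;> ring_nf <;>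
        simp [ha, hb] <;> ring
    · right
      refine mem_triangle (1-b) (b-a) a (by linarith) (by linarith) (by linarith) (by ring) ?_
      ext i
      fin_cases i <;>
        simp [v00, v01, v11, P2, PiLp.add_apply, PiLp.smul_apply] <;> ring_nf <;>
        simp [ha, hb] <;> ring
  · apply Set.union_subset <;>
      refine (convexHull_min ?_ (convex_cell m k)) <;>
      · intro p hp
        rcases hp with rfl | rfl | rfl <;>
          constructor <;> simp [v00, v10, v01, v11, cell] <;> norm_num
end
noncomputable section
def IsCellCorner (m k : ℤ) (y : E2) : Prop :=
  (y 0 = (m:ℝ) ∨ y 0 = (m:ℝ)+1) ∧ (y 1 = (k:ℝ) ∨ y 1 = (k:ℝ)+1)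

lemma dist_formula (x y : E2) :
    dist x y = Real.sqrt (|x 0 - y 0| ^ 2 + |x 1 - y 1| ^ 2) := by
  rw [EuclideanSpace.dist_eq, Fin.sum_univ_two, Real.dist_eq, Real.dist_eq]

lemma dist_le_cell {m k : ℤ} {x y : E2} (hx : x ∈ cell m k) (hy : y ∈ cell m k) :
    dist x y ≤ Real.sqrt 2 := by
  obtain ⟨h1, h2, h3, h4⟩ := hx
  obtain ⟨g1, g2, g3, g4⟩ := hy
  rw [dist_formula]
  apply Real.sqrt_le_sqrt
  have a0 : |x 0 - y 0| ≤ 1 := abs_le.mpr ⟨by linarith, by linarith⟩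
  have a1 : |x 1 - y 1| ≤ 1 := abs_le.mpr ⟨by linarith, by linarith⟩
  nlinarith [abs_nonneg (x 0 - y 0), abs_nonneg (x 1 - y 1)]

lemma dist_lt_cell {m k : ℤ} {x y : E2} (hx : x ∈ cell m k) (hy : y ∈ cell m k)
    (hyc : ¬ IsCellCorner m k y) : dist x y < Real.sqrt 2 := by
  obtain ⟨h1, h2, h3, h4⟩ := hx
  obtain ⟨g1, g2, g3, g4⟩ := hy
  rw [dist_formula]
  have a0 : |x 0 - y 0| ≤ 1 := abs_le.mpr ⟨by linarith, by linarith⟩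
  have a1 : |x 1 - y 1| ≤ 1 := abs_le.mpr ⟨by linarith, by linarith⟩
  have key : |x 0 - y 0| < 1 ∨ |x 1 - y 1| < 1 := by
    rw [IsCellCorner] at hyc
    push_neg at hyc
    by_cases hc0 : y 0 = (m:ℝ) ∨ y 0 = (m:ℝ)+1
    · obtain ⟨hu, hv⟩ := hyc hc0
      have : (k:ℝ) < y 1 := lt_of_le_of_ne g3 (Ne.symm hu)
      have : y 1 < (k:ℝ)+1 := lt_of_le_of_ne g4 hv
      right; exact abs_lt.mpr ⟨by linarith, by linarith⟩
    · push_neg at hc0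
      obtain ⟨hu, hv⟩ := hc0
      have : (m:ℝ) < y 0 := lt_of_le_of_ne g1 (Ne.symm hu)
      have : y 0 < (m:ℝ)+1 := lt_of_le_of_ne g2 hv
      left; exact abs_lt.mpr ⟨by linarith, by linarith⟩
  apply Real.sqrt_lt_sqrt (by positivity)
  rcases key with h | h <;> nlinarith [abs_nonneg (x 0 - y 0), abs_nonneg (x 1 - y 1)]

lemma corner_cases {m k : ℤ} {y : E2} (h : IsCellCorner m k y) :
    y = v00 m k ∨ y = v10 m k ∨ y = v01 m k ∨ y = v11 m k := by
  obtain ⟨h0, h1⟩ := h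
  have hy := P2_eta y
  rcases h0 with e0 | e0 <;> rcases h1 with e1 | e1 <;>
    rw [e0, e1] at hy <;> simp [v00, v10, v01, v11, hy]

lemma coord_le_norm (x : E2) (i : Fin 2) : |x i| ≤ ‖x‖ := by
  rw [EuclideanSpace.norm_eq, ← Real.sqrt_sq_eq_abs]
  apply Real.sqrt_le_sqrt
  rw [Fin.sum_univ_two]
  fin_cases i <;> simp [sq_abs] <;> positivity
end
noncomputable section
open Metric

lemma infDist_compl_lt {K : Set E2} (hK : IsClosed K) {x y : E2}
    (hx : x ∈ K) (hy : y ∉ K) (hd : dist x y ≤ Real.sqrt 2) :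
    infDist x Kᶜ < Real.sqrt 2 := by
  have hopen : IsOpen Kᶜ := hK.isOpen_compl
  obtain ⟨r, hr, hball⟩ := Metric.isOpen_iff.mp hopen y hy
  have hxy : 0 < dist x y := dist_pos.mpr (fun h => hy (h ▸ hx))
  set d := dist x y with hdd
  set ε : ℝ := min (r / (2 * d)) (1/2) with hε
  have hε0 : 0 < ε := lt_min (by positivity) (by norm_num)
  have hεhalf : ε ≤ 1/2 := min_le_right _ _
  set z : E2 := y + ε • (x - y) with hz
  have hzy : dist z y = ε * d := by
    rw [dist_eq_norm]
    have : z - y = ε • (x - y) := by rw [hz]; abel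
    rw [this, norm_smul, Real.norm_of_nonneg hε0.le, ← dist_eq_norm, hdd]
  have hzball : z ∈ Metric.ball y r := by
    rw [Metric.mem_ball, hzy]
    have hle : ε ≤ r / (2*d) := min_le_left _ _
    have heq : (r/(2*d))*d = r/2 := by field_simp
    nlinarith [mul_le_mul_of_nonneg_right hle hxy.le]
  have hzc : z ∈ Kᶜ := hball hzball
  have hxz : dist x z = (1 - ε) * d := by
    rw [dist_eq_norm]
    have : x - z = (1 - ε) • (x - y) := by
      rw [hz]; module
    rw [this, norm_smul, Real.norm_of_nonneg (by linarith), ← dist_eq_norm, hdd]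
  calc infDist x Kᶜ ≤ dist x z := infDist_le_dist_of_mem hzc
    _ = (1-ε)*d := hxz
    _ < Real.sqrt 2 := by nlinarith [Real.sqrt_pos.mpr (show (0:ℝ) < 2 by norm_num)]

end

lemma polygonal_compact {P : Set E2} (hP : IsLatticePolygonalRegion P) : IsCompact P := by
  obtain ⟨T, -, rfl⟩ := hP
  apply T.finite_toSet.isCompact_biUnion
  intro t _
  exact (Set.finite_singleton _ |>.insert _ |>.insert _).isCompact_convexHull ℝ
noncomputable section
open Metric
open scoped Classical

lemma lat_v00 (m k : ℤ) : IsLatticePoint (v00 m k) := ⟨⟨m, rfl⟩, ⟨k, rfl⟩⟩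
lemma lat_v10 (m k : ℤ) : IsLatticePoint (v10 m k) := ⟨⟨m+1, by push_cast; rfl⟩, ⟨k, rfl⟩⟩
lemma lat_v01 (m k : ℤ) : IsLatticePoint (v01 m k) := ⟨⟨m, rfl⟩, ⟨k+1, by push_cast; rfl⟩⟩
lemma lat_v11 (m k : ℤ) : IsLatticePoint (v11 m k) :=
  ⟨⟨m+1, by push_cast; rfl⟩, ⟨k+1, by push_cast; rfl⟩⟩

def triIn (K : Set E2) (mk : ℤ × ℤ) : Finset (E2 × E2 × E2) :=
  if cell mk.1 mk.2 ⊆ K then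
    {(v00 mk.1 mk.2, v10 mk.1 mk.2, v11 mk.1 mk.2),
     (v00 mk.1 mk.2, v01 mk.1 mk.2, v11 mk.1 mk.2)}
  else ∅

def triOut (K : Set E2) (mk : ℤ × ℤ) : Finset (E2 × E2 × E2) :=
  if ∃ y ∈ cell mk.1 mk.2 ∩ K, ¬ IsCellCorner mk.1 mk.2 y then
    {(v00 mk.1 mk.2, v10 mk.1 mk.2, v11 mk.1 mk.2),
     (v00 mk.1 mk.2, v01 mk.1 mk.2, v11 mk.1 mk.2)}
  else
    (({v00 mk.1 mk.2, v10 mk.1 mk.2, v01 mk.1 mk.2, v11 mk.1 mk.2} : Finset E2).filter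
      (· ∈ K)).image (fun p => (p, p, p))

lemma LT_subset_cell (m k : ℤ) :
    convexHull ℝ ({v00 m k, v10 m k, v11 m k} : Set E2) ⊆ cell m k := by
  rw [cell_eq_union m k]; exact Set.subset_union_left

lemma UT_subset_cell (m k : ℤ) :
    convexHull ℝ ({v00 m k, v01 m k, v11 m k} : Set E2) ⊆ cell m k := by
  rw [cell_eq_union m k]; exact Set.subset_union_right

lemma triIn_lattice (K : Set E2) (mk : ℤ × ℤ) (t : E2 × E2 × E2) (ht : t ∈ triIn K mk) :
    IsLatticePoint t.1 ∧ IsLatticePoint t.2.1 ∧ IsLatticePoint t.2.2 := by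
  rw [triIn] at ht
  split_ifs at ht
  · rcases Finset.mem_insert.mp ht with rfl | ht
    · exact ⟨lat_v00 _ _, lat_v10 _ _, lat_v11 _ _⟩
    · rcases Finset.mem_singleton.mp ht with rfl
      exact ⟨lat_v00 _ _, lat_v01 _ _, lat_v11 _ _⟩
  · exact absurd ht (Finset.notMem_empty t)

lemma triOut_lattice (K : Set E2) (mk : ℤ × ℤ) (t : E2 × E2 × E2) (ht : t ∈ triOut K mk) :
    IsLatticePoint t.1 ∧ IsLatticePoint t.2.1 ∧ IsLatticePoint t.2.2 := by
  rw [triOut] at ht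
  split_ifs at ht
  · simp only [Finset.mem_insert, Finset.mem_singleton] at ht
    rcases ht with rfl | rfl
    · exact ⟨lat_v00 _ _, lat_v10 _ _, lat_v11 _ _⟩
    · exact ⟨lat_v00 _ _, lat_v01 _ _, lat_v11 _ _⟩
  · simp only [Finset.mem_image, Finset.mem_filter, Finset.mem_insert,
      Finset.mem_singleton] at ht
    obtain ⟨p, ⟨hp, -⟩, rfl⟩ := ht
    rcases hp with rfl | rfl | rfl | rfl
    · exact ⟨lat_v00 _ _, lat_v00 _ _, lat_v00 _ _⟩
    · exact ⟨lat_v10 _ _, lat_v10 _ _, lat_v10 _ _⟩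
    · exact ⟨lat_v01 _ _, lat_v01 _ _, lat_v01 _ _⟩
    · exact ⟨lat_v11 _ _, lat_v11 _ _, lat_v11 _ _⟩
end

/-- Headline claim: the inner and outer roundings sandwich the exact
intersection, `Q₁ ⊆ A ∩ B ⊆ Q₂`, each within distance `√2`. -/
theorem inner_outer_rounding_sandwich
    (A B : Set (EuclideanSpace ℝ (Fin 2)))
    (hA : IsLatticePolygonalRegion A) (hB : IsLatticePolygonalRegion B)
    (hAB : (A ∩ B).Nonempty) :
    ∃ Q₁ Q₂ : Set (EuclideanSpace ℝ (Fin 2)),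
      IsLatticePolygonalRegion Q₁ ∧ IsLatticePolygonalRegion Q₂ ∧
      Q₁ ⊆ A ∩ B ∧ A ∩ B ⊆ Q₂ ∧
      (∀ x ∈ (A ∩ B) \ Q₁, Metric.infDist x ((A ∩ B)ᶜ) < Real.sqrt 2) ∧
      (∀ x ∈ Q₂, Metric.infDist x (A ∩ B) < Real.sqrt 2) := by
  classical
  have hKcomp : IsCompact (A ∩ B) :=
    (polygonal_compact hA).inter_right (polygonal_compact hB).isClosed
  have hKclosed : IsClosed (A ∩ B) := hKcomp.isClosed
  obtain ⟨R, hRK⟩ := (Metric.isBounded_iff_subset_closedBall 0).mp hKcomp.isBounded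
  set K := A ∩ B with hKdef
  set N : ℤ := ⌈R⌉ + 1 with hN
  set S : Finset (ℤ × ℤ) := Finset.Icc (-N) N ×ˢ Finset.Icc (-N) N with hSdef
  have hcoord : ∀ y ∈ K, ∀ i : Fin 2, |y i| ≤ R := by
    intro y hy i
    refine (coord_le_norm y i).trans ?_
    have := hRK hy
    rwa [Metric.mem_closedBall, dist_zero_right] at this
  have hS : ∀ y ∈ K, (⌊y 0⌋, ⌊y 1⌋) ∈ S := by
    intro y hy
    have h0 := abs_le.mp (hcoord y hy 0)
    have h1 := abs_le.mp (hcoord y hy 1)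
    have hRceil := Int.le_ceil R
    simp only [hSdef, Finset.mem_product, Finset.mem_Icc]
    refine ⟨⟨?_, ?_⟩, ?_, ?_⟩
    · have : ((-N : ℤ) : ℝ) ≤ ((⌊y 0⌋ : ℤ) : ℝ) := by
        push_cast [hN]
        have := Int.sub_one_lt_floor (y 0)
        linarith
      exact_mod_cast this
    · have : ((⌊y 0⌋ : ℤ) : ℝ) ≤ ((N : ℤ) : ℝ) := by
        push_cast [hN]
        have := Int.floor_le (y 0)
        linarith
      exact_mod_cast this
    · have : ((-N : ℤ) : ℝ) ≤ ((⌊y 1⌋ : ℤ) : ℝ) := by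
        push_cast [hN]
        have := Int.sub_one_lt_floor (y 1)
        linarith
      exact_mod_cast this
    · have : ((⌊y 1⌋ : ℤ) : ℝ) ≤ ((N : ℤ) : ℝ) := by
        push_cast [hN]
        have := Int.floor_le (y 1)
        linarith
      exact_mod_cast this
  set TQ1 := S.biUnion (triIn K) with hTQ1
  set TQ2 := S.biUnion (triOut K) with hTQ2
  refine ⟨⋃ t ∈ TQ1, convexHull ℝ ({t.1, t.2.1, t.2.2} : Set E2),
          ⋃ t ∈ TQ2, convexHull ℝ ({t.1, t.2.1, t.2.2} : Set E2),
          ⟨TQ1, ?_, rfl⟩, ⟨TQ2, ?_, rfl⟩, ?_, ?_, ?_, ?_⟩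
  · intro t ht
    obtain ⟨mk, -, ht⟩ := Finset.mem_biUnion.mp ht
    exact triIn_lattice K mk t ht
  · intro t ht
    obtain ⟨mk, -, ht⟩ := Finset.mem_biUnion.mp ht
    exact triOut_lattice K mk t ht
  · -- Q₁ ⊆ K
    intro x hx
    rw [Set.mem_iUnion₂] at hx
    obtain ⟨t, ht, hxt⟩ := hx
    obtain ⟨mk, -, ht⟩ := Finset.mem_biUnion.mp ht
    rw [triIn] at ht
    split_ifs at ht with hsub
    · simp only [Finset.mem_insert, Finset.mem_singleton] at ht
      rcases ht with rfl | rfl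
      · exact hsub (LT_subset_cell _ _ hxt)
      · exact hsub (UT_subset_cell _ _ hxt)
    · exact absurd ht (Finset.notMem_empty t)
  · -- K ⊆ Q₂
    intro y hy
    rw [Set.mem_iUnion₂]
    have hycell : y ∈ cell ⌊y 0⌋ ⌊y 1⌋ := mem_cell_floor y
    have hmk : (⌊y 0⌋, ⌊y 1⌋) ∈ S := hS y hy
    by_cases hex : ∃ z ∈ cell ⌊y 0⌋ ⌊y 1⌋ ∩ K, ¬ IsCellCorner ⌊y 0⌋ ⌊y 1⌋ z
    · have hyu := hycell
      rw [cell_eq_union] at hyu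
      rcases hyu with h | h
      · refine ⟨(v00 ⌊y 0⌋ ⌊y 1⌋, v10 ⌊y 0⌋ ⌊y 1⌋, v11 ⌊y 0⌋ ⌊y 1⌋), ?_, h⟩
        refine Finset.mem_biUnion.mpr ⟨(⌊y 0⌋, ⌊y 1⌋), hmk, ?_⟩
        rw [triOut, if_pos hex]
        exact Finset.mem_insert_self _ _
      · refine ⟨(v00 ⌊y 0⌋ ⌊y 1⌋, v01 ⌊y 0⌋ ⌊y 1⌋, v11 ⌊y 0⌋ ⌊y 1⌋), ?_, h⟩
        refine Finset.mem_biUnion.mpr ⟨(⌊y 0⌋, ⌊y 1⌋), hmk, ?_⟩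
        rw [triOut, if_pos hex]
        exact Finset.mem_insert.mpr (Or.inr (Finset.mem_singleton_self _))
    · have hall : ∀ z ∈ cell ⌊y 0⌋ ⌊y 1⌋ ∩ K, IsCellCorner ⌊y 0⌋ ⌊y 1⌋ z := by
        have h := hex; push_neg at h; exact h
      have hyco := hall y ⟨hycell, hy⟩
      have hv := corner_cases hyco
      refine ⟨(y, y, y), ?_, ?_⟩
      · refine Finset.mem_biUnion.mpr ⟨(⌊y 0⌋, ⌊y 1⌋), hmk, ?_⟩
        rw [triOut, if_neg hex]
        simp only [Finset.mem_image, Finset.mem_filter]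
        refine ⟨y, ⟨?_, hy⟩, rfl⟩
        simp only [Finset.mem_insert, Finset.mem_singleton]
        exact hv
      · show y ∈ convexHull ℝ ({y, y, y} : Set E2)
        have : ({y, y, y} : Set E2) = {y} := by simp
        rw [this, convexHull_singleton]
        exact Set.mem_singleton y
  · -- points of K \ Q₁ are close to the complement
    rintro x ⟨hxK, hxQ1⟩
    by_cases hsub : cell ⌊x 0⌋ ⌊x 1⌋ ⊆ K
    · exfalso
      apply hxQ1
      rw [Set.mem_iUnion₂]
      have hx := mem_cell_floor x
      rw [cell_eq_union] at hx
      rcases hx with h | h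
      · exact ⟨(v00 ⌊x 0⌋ ⌊x 1⌋, v10 ⌊x 0⌋ ⌊x 1⌋, v11 ⌊x 0⌋ ⌊x 1⌋),
          Finset.mem_biUnion.mpr ⟨(⌊x 0⌋, ⌊x 1⌋), hS x hxK, by
            rw [triIn, if_pos hsub]; exact Finset.mem_insert_self _ _⟩, h⟩
      · exact ⟨(v00 ⌊x 0⌋ ⌊x 1⌋, v01 ⌊x 0⌋ ⌊x 1⌋, v11 ⌊x 0⌋ ⌊x 1⌋),
          Finset.mem_biUnion.mpr ⟨(⌊x 0⌋, ⌊x 1⌋), hS x hxK, by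
            rw [triIn, if_pos hsub]
            exact Finset.mem_insert.mpr (Or.inr (Finset.mem_singleton_self _))⟩, h⟩
    · obtain ⟨z, hzcell, hzK⟩ := Set.not_subset.mp hsub
      exact infDist_compl_lt hKclosed hxK hzK (dist_le_cell (mem_cell_floor x) hzcell)
  · -- points of Q₂ are close to K
    intro x hx
    rw [Set.mem_iUnion₂] at hx
    obtain ⟨t, ht, hxt⟩ := hx
    obtain ⟨mk, -, ht⟩ := Finset.mem_biUnion.mp ht
    rw [triOut] at ht
    split_ifs at ht with hex
    · obtain ⟨z, ⟨hzcell, hzK⟩, hznc⟩ := hex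
      have hxcell : x ∈ cell mk.1 mk.2 := by
        simp only [Finset.mem_insert, Finset.mem_singleton] at ht
        rcases ht with rfl | rfl
        · exact LT_subset_cell _ _ hxt
        · exact UT_subset_cell _ _ hxt
      exact lt_of_le_of_lt (Metric.infDist_le_dist_of_mem hzK) (dist_lt_cell hxcell hzcell hznc)
    · simp only [Finset.mem_image, Finset.mem_filter] at ht
      obtain ⟨p, ⟨-, hpK⟩, rfl⟩ := ht
      have hxp : x = p := by
        have he : ({p, p, p} : Set E2) = {p} := by simp
        have hxt' : x ∈ convexHull ℝ ({p, p, p} : Set E2) := hxt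
        rw [he, convexHull_singleton] at hxt'
        exact hxt'
      rw [hxp]
      rw [Metric.infDist_zero_of_mem hpK]
      exact Real.sqrt_pos.mpr (by norm_num)
end

section
/- Let A and B be lattice polygonal regions in the plane such that A ∩ B is convex and contains at least one lattice point. Then there exists a nonempty convex lattice polygonal region Q (i.e., Q is the convex hull of a finite nonempty set of lattice points) such that Q ⊆ A ∩ B and every point x of (A ∩ B) \ Q satisfies Metric.infDist x ((A ∩ B)ᶜ) < Real.sqrt 2. -/
noncomputable def pt (a b : ℝ) : EuclideanSpace ℝ (Fin 2) := WithLp.toLp 2 (fun i : Fin 2 => if i = 0 then a else b)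

@[simp] lemma pt_zero (a b : ℝ) : pt a b 0 = a := rfl
@[simp] lemma pt_one (a b : ℝ) : pt a b 1 = b := rfl

lemma coord_le (p : EuclideanSpace ℝ (Fin 2)) (i : Fin 2) : |p i| ≤ ‖p‖ := by
  rw [EuclideanSpace.norm_eq]
  rw [show |p i| = Real.sqrt (‖p i‖^2) by
    rw [Real.norm_eq_abs, Real.sqrt_sq_eq_abs, abs_abs]]
  apply Real.sqrt_le_sqrt
  exact Finset.single_le_sum (fun j _ => sq_nonneg ‖p j‖) (Finset.mem_univ i)

lemma latticeRegion_isCompact {P : Set (EuclideanSpace ℝ (Fin 2))}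
    (h : ∃ T : Finset (EuclideanSpace ℝ (Fin 2) × EuclideanSpace ℝ (Fin 2) × EuclideanSpace ℝ (Fin 2)),
      True ∧ P = ⋃ t ∈ T, convexHull ℝ ({t.1, t.2.1, t.2.2} : Set (EuclideanSpace ℝ (Fin 2)))) :
    IsCompact P := by
  obtain ⟨T, -, rfl⟩ := h
  apply T.finite_toSet.isCompact_biUnion
  intro t _
  exact (Set.toFinite ({t.1, t.2.1, t.2.2} : Set _)).isCompact_convexHull ℝ

lemma mem_square_hull (a b : ℝ) (x : EuclideanSpace ℝ (Fin 2))
    (h0 : x 0 ∈ Set.Icc a (a+1)) (h1 : x 1 ∈ Set.Icc b (b+1)) :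
    x ∈ convexHull ℝ ({pt a b, pt a (b+1), pt (a+1) b, pt (a+1) (b+1)} :
        Set (EuclideanSpace ℝ (Fin 2))) := by
  set K := convexHull ℝ ({pt a b, pt a (b+1), pt (a+1) b, pt (a+1) (b+1)} :
      Set (EuclideanSpace ℝ (Fin 2)))
  have hK : Convex ℝ K := convex_convexHull _ _
  have h00 : pt a b ∈ K := subset_convexHull _ _ (by simp)
  have h01 : pt a (b+1) ∈ K := subset_convexHull _ _ (by simp)
  have h10 : pt (a+1) b ∈ K := subset_convexHull _ _ (by simp)
  have h11 : pt (a+1) (b+1) ∈ K := subset_convexHull _ _ (by simp)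
  set s : ℝ := x 1 - b with hs
  set t : ℝ := x 0 - a with ht
  have hs0 : 0 ≤ s := by simp [hs]; linarith [h1.1]
  have hs1 : s ≤ 1 := by simp [hs]; linarith [h1.2]
  have ht0 : 0 ≤ t := by simp [ht]; linarith [h0.1]
  have ht1 : t ≤ 1 := by simp [ht]; linarith [h0.2]
  have hp : (1-s) • pt a b + s • pt a (b+1) ∈ K :=
    hK h00 h01 (by linarith) hs0 (by ring)
  have hq : (1-s) • pt (a+1) b + s • pt (a+1) (b+1) ∈ K :=
    hK h10 h11 (by linarith) hs0 (by ring)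
  have hx : x = (1-t) • ((1-s) • pt a b + s • pt a (b+1))
      + t • ((1-s) • pt (a+1) b + s • pt (a+1) (b+1)) := by
    ext i
    fin_cases i <;>
      simp [PiLp.add_apply, PiLp.smul_apply, smul_eq_mul, hs, ht] <;> ring
  rw [hx]
  exact hK hp hq (by linarith) ht0 (by ring)

lemma dist_pt_lt (x : EuclideanSpace ℝ (Fin 2)) (a b : ℝ)
    (h : (x 0 - a)^2 + (x 1 - b)^2 < 2) : dist x (pt a b) < Real.sqrt 2 := by
  rw [EuclideanSpace.dist_eq]
  apply Real.sqrt_lt_sqrt (by positivity)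
  simpa [Fin.sum_univ_two, Real.dist_eq, sq_abs] using h


/-- Corollary 1 (inner mode preserves convexity): if `A ∩ B` is convex and
contains a lattice point, then it admits a nonempty *convex* lattice polygonal
inner rounding, namely the convex hull of a finite nonempty set of lattice
points. -/
theorem inner_rounding_convex
    (A B : Set (EuclideanSpace ℝ (Fin 2)))
    (hA : IsLatticePolygonalRegion A) (hB : IsLatticePolygonalRegion B)
    (hconv : Convex ℝ (A ∩ B))
    (hlat : ∃ p ∈ A ∩ B, IsLatticePoint p) :
    ∃ (S : Finset (EuclideanSpace ℝ (Fin 2))),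
      S.Nonempty ∧ (∀ v ∈ S, IsLatticePoint v) ∧
      (convexHull ℝ (S : Set (EuclideanSpace ℝ (Fin 2)))) ⊆ A ∩ B ∧
      ∀ x ∈ (A ∩ B) \ convexHull ℝ (S : Set (EuclideanSpace ℝ (Fin 2))),
        Metric.infDist x ((A ∩ B)ᶜ) < Real.sqrt 2 := by
  obtain ⟨p0, hp0, hp0lat⟩ := hlat
  have hAc : IsCompact A := latticeRegion_isCompact (by
    obtain ⟨T, _, h2⟩ := hA; exact ⟨T, trivial, h2⟩)
  have hbd : Bornology.IsBounded (A ∩ B) := hAc.isBounded.subset Set.inter_subset_left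
  obtain ⟨R, hR⟩ := hbd.exists_norm_le
  set Sset : Set (EuclideanSpace ℝ (Fin 2)) := {p | p ∈ A ∩ B ∧ IsLatticePoint p} with hSset
  have hfin : Sset.Finite := by
    have hsub : Sset ⊆ (fun z : ℤ × ℤ => pt z.1 z.2) ''
        (Set.Icc ⌈-R⌉ ⌊R⌋ ×ˢ Set.Icc ⌈-R⌉ ⌊R⌋) := by
      rintro p ⟨hpAB, ⟨m, hm⟩, ⟨k, hk⟩⟩
      have hpeq : p = pt (m : ℝ) (k : ℝ) := by
        ext i; fin_cases i <;> simp [hm, hk]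
      have hnorm := hR p hpAB
      have h0 := (abs_le.mp ((coord_le p 0).trans hnorm))
      have h1 := (abs_le.mp ((coord_le p 1).trans hnorm))
      rw [hm] at h0; rw [hk] at h1
      exact ⟨(m, k), ⟨⟨Int.ceil_le.mpr (by exact_mod_cast h0.1),
        Int.le_floor.mpr (by exact_mod_cast h0.2)⟩,
        Int.ceil_le.mpr (by exact_mod_cast h1.1),
        Int.le_floor.mpr (by exact_mod_cast h1.2)⟩, hpeq.symm⟩
    exact (((Set.finite_Icc _ _).prod (Set.finite_Icc _ _)).image _).subset hsub
  refine ⟨hfin.toFinset, ⟨p0, hfin.mem_toFinset.mpr ⟨hp0, hp0lat⟩⟩,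
    fun v hv => (hfin.mem_toFinset.mp hv).2, ?_, ?_⟩
  · refine convexHull_min ?_ hconv
    intro v hv
    rw [hfin.coe_toFinset] at hv
    exact hv.1
  · rintro x ⟨hxAB, hxQ⟩
    by_contra hcon
    push_neg at hcon
    have hball : ∀ y, dist x y < Real.sqrt 2 → y ∈ A ∩ B := by
      intro y hy
      by_contra hyc
      have := Metric.infDist_le_dist_of_mem (x := x) (s := (A ∩ B)ᶜ) hyc
      linarith
    have hhull : (Sset : Set _) = ↑hfin.toFinset := hfin.coe_toFinset.symm
    have hmemS : ∀ q ∈ Sset, q ∈ convexHull ℝ (↑hfin.toFinset : Set (EuclideanSpace ℝ (Fin 2))) :=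
      fun q hq => subset_convexHull _ _ (Finset.mem_coe.mpr (hfin.mem_toFinset.mpr hq))
    by_cases hxlat : IsLatticePoint x
    · exact hxQ (hmemS x ⟨hxAB, hxlat⟩)
    · set m : ℤ := ⌊x 0⌋ with hm
      set k : ℤ := ⌊x 1⌋ with hk
      set t : ℝ := x 0 - m with htdef
      set s : ℝ := x 1 - k with hsdef
      have ht0 : 0 ≤ t := by simp [htdef]; exact Int.floor_le _
      have ht1 : t < 1 := by simp [htdef]; linarith [Int.lt_floor_add_one (x 0)]
      have hs0 : 0 ≤ s := by simp [hsdef]; exact Int.floor_le _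
      have hs1 : s < 1 := by simp [hsdef]; linarith [Int.lt_floor_add_one (x 1)]
      have hts : t ≠ 0 ∨ s ≠ 0 := by
        by_contra hc
        push_neg at hc
        exact hxlat ⟨⟨m, by linarith [hc.1]⟩, ⟨k, by linarith [hc.2]⟩⟩
      have hcorner : ∀ a b : ℤ, (x 0 - a)^2 + (x 1 - b)^2 < 2 →
          pt (a : ℝ) (b : ℝ) ∈ Sset := by
        intro a b hd
        refine ⟨hball _ (dist_pt_lt x _ _ hd), ⟨a, by simp⟩, ⟨b, by simp⟩⟩
      have c00 : pt (m : ℝ) (k : ℝ) ∈ Sset := hcorner m k (by nlinarith)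
      have c01 : pt (m : ℝ) ((k : ℝ) + 1) ∈ Sset := by
        have := hcorner m (k + 1) (by push_cast; nlinarith)
        simpa [Int.cast_add, Int.cast_one] using this
      have c10 : pt ((m : ℝ) + 1) (k : ℝ) ∈ Sset := by
        have := hcorner (m + 1) k (by push_cast; nlinarith)
        simpa [Int.cast_add, Int.cast_one] using this
      have c11 : pt ((m : ℝ) + 1) ((k : ℝ) + 1) ∈ Sset := by
        have h2 : (x 0 - ((m : ℤ) + 1 : ℤ))^2 + (x 1 - ((k : ℤ) + 1 : ℤ))^2 < 2 := by
          push_cast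
          rcases hts with h | h
          · nlinarith [sq_nonneg (t - 1), sq_nonneg (s - 1), lt_of_le_of_ne ht0 (Ne.symm h)]
          · nlinarith [sq_nonneg (t - 1), sq_nonneg (s - 1), lt_of_le_of_ne hs0 (Ne.symm h)]
        have := hcorner (m + 1) (k + 1) h2
        simpa [Int.cast_add, Int.cast_one] using this
      have hxmem : x ∈ convexHull ℝ ({pt (m:ℝ) (k:ℝ), pt (m:ℝ) ((k:ℝ)+1),
          pt ((m:ℝ)+1) (k:ℝ), pt ((m:ℝ)+1) ((k:ℝ)+1)} : Set (EuclideanSpace ℝ (Fin 2))) :=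
        mem_square_hull _ _ _ ⟨Int.floor_le _, by linarith [Int.lt_floor_add_one (x 0)]⟩
          ⟨Int.floor_le _, by linarith [Int.lt_floor_add_one (x 1)]⟩
      refine hxQ (convexHull_mono ?_ hxmem)
      intro q hq
      simp only [Finset.mem_coe, hfin.mem_toFinset]
      rcases hq with h | h | h | h <;> subst h <;> assumption
end
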